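/- arXiv:1801.06946 — 8 statements merged into one kernel-verified Lean document; each statement's English description precedes it below -/
import Mathlib

section
/- Let E be a finite-dimensional real inner product space and let X and Y be nonempty compact convex subsets of E. Then for every nonempty compact convex W ⊆ E with X ⊆ Y + W, there exists a nonempty compact convex Z ⊆ W such that X ⊆ Y + Z and Z is inclusion-minimal among nonempty compact convex sets Z' with X ⊆ Y + Z' (i.e., Z ∈ X ÷ Y). In particular, the collection X ÷ Y is nonempty. -/
/-!
By Zorn's lemma it suffices that the intersection of a chain of feasible sets `Z` (nonempty
compact convex with `X ⊆ Y + Z`) is again feasible. For `x ∈ X` the sets `(x - Y) ∩ Z`, `Z` in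
the chain, form a directed family of nonempty compact sets, so they share a point `z`; then
`z` lies in the intersection and `x ∈ Y + z`.
-/

open Pointwise
open scoped RealInnerProductSpace

/-- The support function of a set `A ⊆ E`: `h_A(p) = sup_{a ∈ A} ⟪p, a⟫`. -/
noncomputable def supportFn {E : Type*} [NormedAddCommGroup E] [InnerProductSpace ℝ E]
    (A : Set E) (p : E) : ℝ :=
  sSup ((fun a => ⟪p, a⟫) '' A)

/-- `Z` is a member of the generalized Minkowski–Pontryagin difference `X ÷ Y`:
`Z` is nonempty, compact, convex, `X ⊆ Y + Z`, and no nonempty compact convex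
proper subset `Z' ⊊ Z` satisfies `X ⊆ Y + Z'`. -/
def MemGMPDiff {E : Type*} [NormedAddCommGroup E] [InnerProductSpace ℝ E]
    (X Y Z : Set E) : Prop :=
  Z.Nonempty ∧ IsCompact Z ∧ Convex ℝ Z ∧ X ⊆ Y + Z ∧
    ∀ Z' : Set E, Z'.Nonempty → IsCompact Z' → Convex ℝ Z' → Z' ⊂ Z → ¬ X ⊆ Y + Z'

theorem Set.mem_add_iff_sub_image_inter_nonempty {G : Type*} [AddCommGroup G]
    {Y Z : Set G} {x : G} : x ∈ Y + Z ↔ ((x - ·) '' Y ∩ Z).Nonempty := by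
  constructor
  · rintro ⟨y, hy, z, hz, rfl⟩
    exact ⟨z, ⟨y, hy, add_sub_cancel_left y z⟩, hz⟩
  · rintro ⟨z, ⟨y, hy, rfl⟩, hz⟩
    exact ⟨y, hy, x - y, hz, add_sub_cancel y x⟩

theorem Set.mem_add_sInter_of_isChain {G : Type*} [TopologicalSpace G] [AddCommGroup G]
    [IsTopologicalAddGroup G] [T2Space G] {Y : Set G} {c : Set (Set G)} (hY : IsClosed Y)
    (hc : IsChain (· ⊆ ·) c) (hcne : c.Nonempty) (hcK : ∀ Z ∈ c, IsCompact Z) {x : G}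
    (hx : ∀ Z ∈ c, x ∈ Y + Z) : x ∈ Y + ⋂₀ c := by
  have : Nonempty c := hcne.to_subtype
  have hxY : IsClosed ((x - ·) '' Y) := (Homeomorph.subLeft x).isClosedMap Y hY
  have hK : ∀ Z : c, IsCompact ((x - ·) '' Y ∩ Z) := fun Z => (hcK Z Z.2).inter_left hxY
  have hdir : Directed (· ⊇ ·) fun Z : c => (x - ·) '' Y ∩ Z := by
    intro Z₁ Z₂
    rcases hc.total Z₁.2 Z₂.2 with h | h
    · exact ⟨Z₁, subset_rfl, Set.inter_subset_inter_right _ h⟩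
    · exact ⟨Z₂, Set.inter_subset_inter_right _ h, subset_rfl⟩
  rw [Set.mem_add_iff_sub_image_inter_nonempty, Set.sInter_eq_iInter, Set.inter_iInter]
  exact IsCompact.nonempty_iInter_of_directed_nonempty_isCompact_isClosed _ hdir
    (fun Z => Set.mem_add_iff_sub_image_inter_nonempty.1 (hx Z Z.2)) hK
    (fun Z => (hK Z).isClosed)

def IsGMPFeasible {E : Type*} [TopologicalSpace E] [AddCommGroup E] [Module ℝ E]
    (X Y Z : Set E) : Prop :=
  Z.Nonempty ∧ IsCompact Z ∧ Convex ℝ Z ∧ X ⊆ Y + Z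

theorem IsGMPFeasible.sInter_of_isChain {E : Type*} [TopologicalSpace E] [AddCommGroup E]
    [Module ℝ E] [IsTopologicalAddGroup E] [T2Space E] {X Y : Set E} {c : Set (Set E)}
    (hX : X.Nonempty) (hY : IsClosed Y) (hcF : ∀ Z ∈ c, IsGMPFeasible X Y Z)
    (hc : IsChain (· ⊆ ·) c) (hcne : c.Nonempty) : IsGMPFeasible X Y (⋂₀ c) := by
  obtain ⟨Z₀, hZ₀⟩ := hcne
  have hcover : X ⊆ Y + ⋂₀ c := fun x hx =>
    Set.mem_add_sInter_of_isChain hY hc ⟨Z₀, hZ₀⟩ (fun Z hZ => (hcF Z hZ).2.1)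
      fun Z hZ => (hcF Z hZ).2.2.2 hx
  refine ⟨(hX.mono hcover).of_add_right, ?_, convex_sInter fun Z hZ => (hcF Z hZ).2.2.1, hcover⟩
  exact (hcF Z₀ hZ₀).2.1.of_isClosed_subset
    (isClosed_sInter fun Z hZ => (hcF Z hZ).2.1.isClosed) (Set.sInter_subset_of_mem hZ₀)

theorem memGMPDiff_of_minimal {E : Type*} [NormedAddCommGroup E] [InnerProductSpace ℝ E]
    {X Y Z : Set E} (hZ : Minimal (IsGMPFeasible X Y) Z) : MemGMPDiff X Y Z :=
  ⟨hZ.prop.1, hZ.prop.2.1, hZ.prop.2.2.1, hZ.prop.2.2.2,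
    fun _ hne hK hconv hsub hcover => hZ.not_ssubset ⟨hne, hK, hconv, hcover⟩ hsub⟩

theorem gmpDiff_nonempty_and_minimal_below_general
    {E : Type*} [NormedAddCommGroup E] [InnerProductSpace ℝ E]
    (X Y : Set E)
    (hXne : X.Nonempty)
    (hYc : IsCompact Y) :
    ∀ W : Set E, W.Nonempty → IsCompact W → Convex ℝ W → X ⊆ Y + W →
      ∃ Z : Set E, Z ⊆ W ∧ MemGMPDiff X Y Z := by
  intro W hWne hWc hWconv hXW
  obtain ⟨Z, hZW, hZ⟩ := zorn_superset_nonempty {Z | IsGMPFeasible X Y Z}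
    (fun c hcF hc hcne => ⟨⋂₀ c, IsGMPFeasible.sInter_of_isChain hXne hYc.isClosed hcF hc hcne,
      fun _ => Set.sInter_subset_of_mem⟩)
    W ⟨hWne, hWc, hWconv, hXW⟩
  exact ⟨Z, hZW, memGMPDiff_of_minimal hZ⟩

theorem gmpDiff_nonempty_and_minimal_below
    {E : Type*} [NormedAddCommGroup E] [InnerProductSpace ℝ E] [FiniteDimensional ℝ E]
    (X Y : Set E)
    (hXne : X.Nonempty) (hXc : IsCompact X) (hXconv : Convex ℝ X)
    (hYne : Y.Nonempty) (hYc : IsCompact Y) (hYconv : Convex ℝ Y) :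
    ∀ W : Set E, W.Nonempty → IsCompact W → Convex ℝ W → X ⊆ Y + W →
      ∃ Z : Set E, Z ⊆ W ∧ MemGMPDiff X Y Z :=
  gmpDiff_nonempty_and_minimal_below_general X Y hXne hYc
end

section
/- Let E be a finite-dimensional real inner product space and let X and Y be nonempty compact convex subsets of E. Then for every p ∈ E, the infimum over Z ∈ X ÷ Y of the support function h_Z(p) equals h_X(p) − h_Y(p). -/
open Pointwise
open scoped RealInnerProductSpace

section Aux

variable {E : Type*} [NormedAddCommGroup E] [InnerProductSpace ℝ E]

lemma innerCont (p : E) : Continuous (fun a : E => ⟪p, a⟫) :=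
  continuous_const.inner continuous_id

lemma supportFn_add (Y Z : Set E) (p : E) (hYne : Y.Nonempty) (hYc : IsCompact Y)
    (hZne : Z.Nonempty) (hZc : IsCompact Z) :
    supportFn (Y + Z) p = supportFn Y p + supportFn Z p := by
  have himg : (fun a : E => ⟪p, a⟫) '' (Y + Z)
      = ((fun a : E => ⟪p, a⟫) '' Y) + ((fun a : E => ⟪p, a⟫) '' Z) := by
    ext x
    simp only [Set.mem_image, Set.mem_add]
    constructor
    · rintro ⟨a, ⟨y, hy, z, hz, rfl⟩, rfl⟩
      exact ⟨_, ⟨y, hy, rfl⟩, _, ⟨z, hz, rfl⟩, (inner_add_right p y z).symm⟩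
    · rintro ⟨_, ⟨y, hy, rfl⟩, _, ⟨z, hz, rfl⟩, rfl⟩
      exact ⟨y + z, ⟨y, hy, z, hz, rfl⟩, inner_add_right p y z⟩
  rw [supportFn, himg]
  exact csSup_add (hYne.image _) ((hYc.image (innerCont p)).bddAbove)
    (hZne.image _) ((hZc.image (innerCont p)).bddAbove)

lemma supportFn_mono {A B : Set E} (p : E) (hA : A.Nonempty) (hB : IsCompact B)
    (hAB : A ⊆ B) : supportFn A p ≤ supportFn B p :=
  csSup_le_csSup ((hB.image (innerCont p)).bddAbove) (hA.image _)
    (Set.image_mono hAB)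

lemma supportFn_lb {A : Set E} {p : E} {a : E} (ha : a ∈ A) (hA : IsCompact A) :
    ⟪p, a⟫ ≤ supportFn A p :=
  le_csSup ((hA.image (innerCont p)).bddAbove) ⟨a, ha, rfl⟩

end Aux

theorem gmpDiff_inf_support
    {E : Type*} [NormedAddCommGroup E] [InnerProductSpace ℝ E] [FiniteDimensional ℝ E]
    (X Y : Set E)
    (hXne : X.Nonempty) (hXc : IsCompact X) (hXconv : Convex ℝ X)
    (hYne : Y.Nonempty) (hYc : IsCompact Y) (hYconv : Convex ℝ Y) :
    ∀ p : E, sInf ((fun Z => supportFn Z p) '' {Z : Set E | MemGMPDiff X Y Z}) =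
      supportFn X p - supportFn Y p := by
  intro p
  set c : ℝ := supportFn X p - supportFn Y p with hc
  -- lower bound: every Z with X ⊆ Y + Z has supportFn Z p ≥ c
  have hlb : ∀ Z : Set E, Z.Nonempty → IsCompact Z → X ⊆ Y + Z → c ≤ supportFn Z p := by
    intro Z hZne hZc hsub
    have h1 : supportFn X p ≤ supportFn (Y + Z) p :=
      supportFn_mono p hXne (hYc.add hZc) hsub
    rw [supportFn_add Y Z p hYne hYc hZne hZc] at h1
    simpa [hc] using sub_le_iff_le_add'.2 h1
  -- construct Z₀ = (X - Y) ∩ {z | ⟪p, z⟫ ≤ c}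
  obtain ⟨y₀, hy₀Y, hy₀max'⟩ := hYc.exists_isMaxOn hYne (innerCont p).continuousOn
  have hy₀max : ∀ y ∈ Y, ⟪p, y⟫ ≤ ⟪p, y₀⟫ := fun y hy => hy₀max' hy
  have hy₀sup : ⟪p, y₀⟫ = supportFn Y p :=
    le_antisymm (supportFn_lb hy₀Y hYc)
      (csSup_le (hYne.image _) (by rintro r ⟨y, hy, rfl⟩; exact hy₀max y hy))
  set H : Set E := {z | ⟪p, z⟫ ≤ c} with hH
  set Z₀ : Set E := (X - Y) ∩ H with hZ₀
  have hXYc : IsCompact (X - Y) := by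
    rw [sub_eq_add_neg]; exact hXc.add hYc.neg
  have hZ₀c : IsCompact Z₀ :=
    hXYc.inter_right (isClosed_le (innerCont p) continuous_const)
  have hZ₀conv : Convex ℝ Z₀ := by
    refine (hXconv.sub hYconv).inter ?_
    exact convex_halfSpace_le (by constructor <;> intros <;>
      simp [inner_add_right, inner_smul_right]) c
  have hXsub : X ⊆ Y + Z₀ := by
    intro x hx
    refine ⟨y₀, hy₀Y, x - y₀, ⟨⟨x, hx, y₀, hy₀Y, rfl⟩, ?_⟩, show y₀ + (x - y₀) = x by abel⟩
    have : ⟪p, x⟫ ≤ supportFn X p := supportFn_lb hx hXc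
    simp only [hH, Set.mem_setOf_eq, inner_sub_right, hy₀sup, hc]
    linarith
  have hZ₀ne : Z₀.Nonempty := by
    obtain ⟨x, hx⟩ := hXne
    obtain ⟨y, _, z, hz, _⟩ := hXsub hx
    exact ⟨z, hz⟩
  -- Zorn: find a minimal element inside Z₀
  set S : Set (Set E) :=
    {Z | Z.Nonempty ∧ IsCompact Z ∧ Convex ℝ Z ∧ X ⊆ Y + Z} with hS
  have hchain : ∀ ch ⊆ S, IsChain (· ⊆ ·) ch → ch.Nonempty →
      ∃ lb ∈ S, ∀ s ∈ ch, lb ⊆ s := by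
    intro ch hchS hchain hchne
    have hdir : DirectedOn (· ⊇ ·) ch := fun a ha b hb =>
      (hchain.total ha hb).elim (fun h => ⟨a, ha, Set.Subset.refl a, h⟩)
        (fun h => ⟨b, hb, h, Set.Subset.refl b⟩)
    have hne : ∀ U ∈ ch, U.Nonempty := fun U hU => (hchS hU).1
    have hcomp : ∀ U ∈ ch, IsCompact U := fun U hU => (hchS hU).2.1
    have hcl : ∀ U ∈ ch, IsClosed U := fun U hU => (hcomp U hU).isClosed
    haveI : Nonempty ch := hchne.to_subtype
    obtain ⟨U₀, hU₀⟩ := id hchne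
    refine ⟨⋂₀ ch, ⟨?_, ?_, ?_, ?_⟩, fun s hs => Set.sInter_subset_of_mem hs⟩
    · exact IsCompact.nonempty_sInter_of_directed_nonempty_isCompact_isClosed hdir hne hcomp hcl
    · exact (hcomp U₀ hU₀).of_isClosed_subset (isClosed_sInter hcl)
        (Set.sInter_subset_of_mem hU₀)
    · exact convex_sInter fun U hU => (hchS hU).2.2.1
    · -- X ⊆ Y + ⋂₀ ch
      intro x hx
      set ch' : Set (Set E) := (fun U => U ∩ ({x} - Y)) '' ch with hch'
      have hxY : IsCompact ({x} - Y) := by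
        rw [sub_eq_add_neg]; exact isCompact_singleton.add hYc.neg
      have h1 : ∀ V ∈ ch', V.Nonempty := by
        rintro V ⟨U, hU, rfl⟩
        obtain ⟨y, hy, z, hz, hxyz⟩ := (hchS hU).2.2.2 hx
        exact ⟨z, hz, x, rfl, y, hy, show x - y = z by rw [← show y + z = x from hxyz]; abel⟩
      have h2 : ∀ V ∈ ch', IsCompact V := by
        rintro V ⟨U, hU, rfl⟩
        exact (hcomp U hU).inter_right hxY.isClosed
      have h3 : ∀ V ∈ ch', IsClosed V := fun V hV => (h2 V hV).isClosed
      have hdir' : DirectedOn (· ⊇ ·) ch' := by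
        rintro _ ⟨U, hU, rfl⟩ _ ⟨W, hW, rfl⟩
        rcases hchain.total hU hW with h | h
        · exact ⟨U ∩ ({x} - Y), ⟨U, hU, rfl⟩, Set.Subset.refl _,
            Set.inter_subset_inter_left _ h⟩
        · exact ⟨W ∩ ({x} - Y), ⟨W, hW, rfl⟩,
            Set.inter_subset_inter_left _ h, Set.Subset.refl _⟩
      haveI : Nonempty ch' := ((hchne.image _).to_subtype)
      obtain ⟨z, hz⟩ :=
        IsCompact.nonempty_sInter_of_directed_nonempty_isCompact_isClosed hdir' h1 h2 h3
      have hzK : z ∈ ⋂₀ ch := by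
        intro U hU
        exact (hz _ ⟨U, hU, rfl⟩).1
      have hzxy : z ∈ {x} - Y := (hz _ ⟨U₀, hU₀, rfl⟩).2
      obtain ⟨x', hx', y, hy, hxyz⟩ := hzxy
      rcases hx' with rfl
      exact ⟨y, hy, z, hzK, show y + z = x' by rw [← show x' - y = z from hxyz]; abel⟩
  obtain ⟨m, hmZ₀, hmin⟩ :=
    zorn_superset_nonempty S hchain Z₀ ⟨hZ₀ne, hZ₀c, hZ₀conv, hXsub⟩
  obtain ⟨hmne, hmc, hmconv, hmsub⟩ := hmin.prop
  have hmMem : MemGMPDiff X Y m := by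
    refine ⟨hmne, hmc, hmconv, hmsub, ?_⟩
    intro Z' hZ'ne hZ'c hZ'conv hZ'm hZ'sub
    exact hZ'm.ne (hmin.eq_of_le ⟨hZ'ne, hZ'c, hZ'conv, hZ'sub⟩ hZ'm.subset)
  have hmle : supportFn m p ≤ c := by
    have h1 : supportFn m p ≤ supportFn Z₀ p := supportFn_mono p hmne hZ₀c hmZ₀
    have h2 : supportFn Z₀ p ≤ c :=
      csSup_le (hZ₀ne.image _) (by rintro r ⟨z, ⟨_, hz⟩, rfl⟩; exact hz)
    exact h1.trans h2
  have hmeq : supportFn m p = c := le_antisymm hmle (hlb m hmne hmc hmsub)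
  refine le_antisymm ?_ ?_
  · exact csInf_le ⟨c, by rintro r ⟨Z, hZ, rfl⟩; exact hlb Z hZ.1 hZ.2.1 hZ.2.2.2.1⟩
      ⟨m, hmMem, hmeq⟩
  · exact le_csInf ⟨_, ⟨m, hmMem, rfl⟩⟩
      (by rintro r ⟨Z, hZ, rfl⟩; exact hlb Z hZ.1 hZ.2.1 hZ.2.2.2.1)
end

section
/- Let E be a finite-dimensional real inner product space and let X, Y, Z be nonempty compact convex subsets of E. Then the collections X ÷ Y and (X + Z) ÷ (Y + Z) coincide: a nonempty compact convex set W belongs to X ÷ Y if and only if it belongs to (X + Z) ÷ (Y + Z). -/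
open Pointwise
open scoped RealInnerProductSpace

/-!
Rådström cancellation: if `A + Z ⊆ B + Z` with `Z` compact nonempty and `B` closed convex, then
`A ⊆ B`. Otherwise some functional `f` strictly separates a point `a ∈ A` from `B`; at `a + z₀`,
where `z₀` maximises `f` on `Z`, `f` exceeds all its values on `B + Z`. Hence, for compact convex
`V`, `X ⊆ Y + V ↔ X + Z ⊆ (Y + Z) + V`: the admissible sets of the two differences are the same,
and so are their inclusion-minimal elements.
-/
section Cancellation

variable {E : Type*} [TopologicalSpace E] [AddCommGroup E] [Module ℝ E]
  [IsTopologicalAddGroup E] [ContinuousSMul ℝ E] [LocallyConvexSpace ℝ E]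

theorem subset_of_add_subset_add_right {A B Z : Set E} (hBclosed : IsClosed B)
    (hBconv : Convex ℝ B) (hZne : Z.Nonempty) (hZc : IsCompact Z) (h : A + Z ⊆ B + Z) :
    A ⊆ B := by
  intro a ha
  by_contra haB
  obtain ⟨f, u, hfB, hfa⟩ := geometric_hahn_banach_closed_point hBconv hBclosed haB
  obtain ⟨z₀, hz₀, hz₀max⟩ := hZc.exists_isMaxOn hZne f.continuous.continuousOn
  obtain ⟨b, hb, z, hz, hbz⟩ := h (Set.add_mem_add ha hz₀)
  have hsum : f b + f z = f a + f z₀ := by rw [← map_add, ← map_add]; exact congrArg f hbz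
  linarith [hfB b hb, isMaxOn_iff.mp hz₀max z hz]

theorem subset_add_iff_add_subset_add_add [T2Space E] {X Y Z V : Set E}
    (hYc : IsCompact Y) (hYconv : Convex ℝ Y) (hZne : Z.Nonempty) (hZc : IsCompact Z)
    (hVc : IsCompact V) (hVconv : Convex ℝ V) :
    X ⊆ Y + V ↔ X + Z ⊆ Y + Z + V := by
  rw [add_right_comm]
  exact ⟨fun h => Set.add_subset_add_right h, subset_of_add_subset_add_right
    (hYc.add hVc).isClosed (hYconv.add hVconv) hZne hZc⟩

end Cancellation

theorem memGMPDiff_congr {E : Type*} [NormedAddCommGroup E] [InnerProductSpace ℝ E]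
    {X Y X' Y' W : Set E}
    (h : ∀ V : Set E, IsCompact V → Convex ℝ V → (X ⊆ Y + V ↔ X' ⊆ Y' + V)) :
    MemGMPDiff X Y W ↔ MemGMPDiff X' Y' W := by
  refine and_congr_right fun _ => and_congr_right fun hWc => and_congr_right fun hWconv => ?_
  refine and_congr (h W hWc hWconv) (forall_congr' fun V => ?_)
  refine imp_congr_right fun _ => forall_congr' fun hVc => forall_congr' fun hVconv => ?_
  rw [h V hVc hVconv]

theorem gmpDiff_cancellation_general
    {E : Type*} [NormedAddCommGroup E] [InnerProductSpace ℝ E]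
    (X Y Z : Set E)
    (hYc : IsCompact Y) (hYconv : Convex ℝ Y)
    (hZne : Z.Nonempty) (hZc : IsCompact Z) :
    ∀ W : Set E, W.Nonempty → IsCompact W → Convex ℝ W →
      (MemGMPDiff X Y W ↔ MemGMPDiff (X + Z) (Y + Z) W) := fun _ _ _ _ =>
  memGMPDiff_congr fun _ hVc hVconv =>
    subset_add_iff_add_subset_add_add hYc hYconv hZne hZc hVc hVconv

theorem gmpDiff_cancellation
    {E : Type*} [NormedAddCommGroup E] [InnerProductSpace ℝ E] [FiniteDimensional ℝ E]
    (X Y Z : Set E)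
    (hXne : X.Nonempty) (hXc : IsCompact X) (hXconv : Convex ℝ X)
    (hYne : Y.Nonempty) (hYc : IsCompact Y) (hYconv : Convex ℝ Y)
    (hZne : Z.Nonempty) (hZc : IsCompact Z) (hZconv : Convex ℝ Z) :
    ∀ W : Set E, W.Nonempty → IsCompact W → Convex ℝ W →
      (MemGMPDiff X Y W ↔ MemGMPDiff (X + Z) (Y + Z) W) :=
  gmpDiff_cancellation_general X Y Z hYc hYconv hZne hZc
end

section
/- Let E be a finite-dimensional real inner product space, let X be a nonempty compact convex subset of E, and let 0 ≤ γ ≤ 1. Then the collection X ÷ (γ • X) consists of exactly one set, namely (1 − γ) • X; that is, a nonempty compact convex set Z belongs to X ÷ (γ • X) if and only if Z = (1 − γ) • X. -/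
/-!
Every compact convex `Z` with `X ⊆ γ • X + Z` already contains `(1 - γ) • X`: if some
`(1 - γ) • a` escaped `Z`, a functional `f` separating it from `Z`, evaluated at a point `m`
of `X` where `f` is maximal, would give `f m < γ f m + (1 - γ) f a ≤ f m`. Since convexity
of `X` makes `(1 - γ) • X` itself such a `Z`, it is the least one, hence the only minimal one.
-/

open Pointwise
open scoped RealInnerProductSpace

theorem one_sub_smul_subset_of_subset_smul_add {E : Type*} [TopologicalSpace E]
    [AddCommGroup E] [Module ℝ E] [IsTopologicalAddGroup E] [ContinuousSMul ℝ E]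
    [LocallyConvexSpace ℝ E] {X Z : Set E} (hXc : IsCompact X) (hZc : IsClosed Z)
    (hZconv : Convex ℝ Z) {γ : ℝ} (hγ0 : 0 ≤ γ) (hγ1 : γ ≤ 1) (h : X ⊆ γ • X + Z) :
    (1 - γ) • X ⊆ Z := by
  rintro _ ⟨a, haX, rfl⟩
  by_contra haZ
  obtain ⟨f, u, hfZ, hfa⟩ := geometric_hahn_banach_closed_point hZconv hZc haZ
  obtain ⟨m, hmX, hmax⟩ := hXc.exists_isMaxOn ⟨a, haX⟩ f.continuous.continuousOn
  obtain ⟨_, ⟨b, hbX, rfl⟩, z, hzZ, hm⟩ := h hmX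
  have hfm : γ * f b + f z = f m := by rw [← hm, map_add, map_smul, smul_eq_mul]
  have hfz : f z < u := hfZ z hzZ
  have hfa' : u < (1 - γ) * f a := by rwa [map_smul, smul_eq_mul] at hfa
  have hbm : γ * f b ≤ γ * f m := mul_le_mul_of_nonneg_left (hmax hbX) hγ0
  have ham : (1 - γ) * f a ≤ (1 - γ) * f m := mul_le_mul_of_nonneg_left (hmax haX) (by linarith)
  linarith

theorem memGMPDiff_iff_eq_of_forall_subset {E : Type*} [NormedAddCommGroup E]
    [InnerProductSpace ℝ E] {X Y W Z : Set E} (hWne : W.Nonempty)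
    (hWc : IsCompact W) (hWconv : Convex ℝ W) (hXW : X ⊆ Y + W)
    (hleast : ∀ Z', IsCompact Z' → Convex ℝ Z' → X ⊆ Y + Z' → W ⊆ Z') :
    MemGMPDiff X Y Z ↔ Z = W := by
  constructor
  · rintro ⟨-, hZc, hZconv, hXZ, hmin⟩
    have hWZ : W ⊆ Z := hleast Z hZc hZconv hXZ
    by_contra hne
    exact hmin W hWne hWc hWconv (hWZ.ssubset_of_ne (Ne.symm hne)) hXW
  · rintro rfl
    exact ⟨hWne, hWc, hWconv, hXW, fun Z' _ hZ'c hZ'conv hZ'Z hXZ' =>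
      hZ'Z.not_subset (hleast Z' hZ'c hZ'conv hXZ')⟩

theorem gmpDiff_distributive_general
    {E : Type*} [NormedAddCommGroup E] [InnerProductSpace ℝ E]
    (X : Set E)
    (hXne : X.Nonempty) (hXc : IsCompact X) (hXconv : Convex ℝ X)
    (γ : ℝ) (hγ0 : 0 ≤ γ) (hγ1 : γ ≤ 1) :
    ∀ Z : Set E, Z.Nonempty → IsCompact Z → Convex ℝ Z →
      (MemGMPDiff X (γ • X) Z ↔ Z = (1 - γ) • X) := by
  intro Z _ _ _
  have hXW : X ⊆ γ • X + (1 - γ) • X := by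
    rw [← hXconv.add_smul hγ0 (sub_nonneg.mpr hγ1), add_sub_cancel, one_smul]
  exact memGMPDiff_iff_eq_of_forall_subset hXne.smul_set (hXc.smul _) (hXconv.smul _) hXW
    fun Z' hZ'c hZ'conv hXZ' =>
      one_sub_smul_subset_of_subset_smul_add hXc hZ'c.isClosed hZ'conv hγ0 hγ1 hXZ'

theorem gmpDiff_distributive
    {E : Type*} [NormedAddCommGroup E] [InnerProductSpace ℝ E] [FiniteDimensional ℝ E]
    (X : Set E)
    (hXne : X.Nonempty) (hXc : IsCompact X) (hXconv : Convex ℝ X)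
    (γ : ℝ) (hγ0 : 0 ≤ γ) (hγ1 : γ ≤ 1) :
    ∀ Z : Set E, Z.Nonempty → IsCompact Z → Convex ℝ Z →
      (MemGMPDiff X (γ • X) Z ↔ Z = (1 - γ) • X) :=
  gmpDiff_distributive_general X hXne hXc hXconv γ hγ0 hγ1
end

section
/- Let E be a finite-dimensional real inner product space and let X and Y be nonempty compact convex subsets of E. Then the collection X ÷ Y equals the singleton collection {{0}} (i.e., a nonempty compact convex set Z belongs to X ÷ Y if and only if Z = {0}) if and only if X = Y. -/
open Pointwise
open scoped RealInnerProductSpace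

/-!
If `X = Y`, every compact convex `Z` with `Y ⊆ Y + Z` contains `0`: otherwise a functional
separating `0` from `Z` is negative on `Z`, and a point of `Y` maximising it cannot lie in `Y + Z`.
So `{0}` is the only minimal such `Z`.

Conversely, `{0} ∈ X ÷ Y` means `X ⊆ Y`. For `y ∈ Y`, the translate `X - y` satisfies
`X ⊆ Y + (X - y)`, and by Zorn's lemma (intersections of chains of compact sets stay feasible)
it contains a minimal feasible set. If that set must be `{0}`, then `0 ∈ X - y`, i.e. `y ∈ X`.
-/

open Set

section TopologicalAddGroup

variable {E : Type*} [TopologicalSpace E] [AddCommGroup E] [IsTopologicalAddGroup E]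

theorem zero_mem_of_subset_add_self [Module ℝ E] [ContinuousSMul ℝ E] [LocallyConvexSpace ℝ E]
    {Y Z : Set E} (hYne : Y.Nonempty) (hYc : IsCompact Y) (hZcl : IsClosed Z)
    (hZconv : Convex ℝ Z) (h : Y ⊆ Y + Z) : (0 : E) ∈ Z := by
  by_contra h0
  obtain ⟨f, u, hfZ, hu⟩ := geometric_hahn_banach_closed_point hZconv hZcl h0
  obtain ⟨y, hyY, hmax⟩ := hYc.exists_isMaxOn hYne f.continuous.continuousOn
  obtain ⟨y', hy', z, hz, rfl⟩ := h hyY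
  have hfz : 0 ≤ f z := by simpa using hmax hy'
  rw [map_zero] at hu
  linarith [hfZ z hz]

theorem mem_add_sInter_of_directedOn [T2Space E] {Y : Set E} {c : Set (Set E)} (hY : IsClosed Y)
    (hc : DirectedOn (· ⊇ ·) c) (hcne : c.Nonempty) (hcc : ∀ Z ∈ c, IsCompact Z) {x : E}
    (hx : ∀ Z ∈ c, x ∈ Y + Z) : x ∈ Y + ⋂₀ c := by
  have : Nonempty c := hcne.to_subtype
  have hpre : IsClosed ((x - ·) ⁻¹' Y) := hY.preimage (continuous_const.sub continuous_id)
  let F : c → Set E := fun Z => Z ∩ (x - ·) ⁻¹' Y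
  have hFdir : Directed (· ⊇ ·) F := fun Z₁ Z₂ =>
    let ⟨Z₃, h₃, h₁, h₂⟩ := hc Z₁ Z₁.2 Z₂ Z₂.2
    ⟨⟨Z₃, h₃⟩, inter_subset_inter_left _ h₁, inter_subset_inter_left _ h₂⟩
  have hFne : ∀ Z, (F Z).Nonempty := fun Z => by
    obtain ⟨y, hy, z, hz, rfl⟩ := hx Z Z.2
    exact ⟨z, hz, by simpa using hy⟩
  obtain ⟨z, hz⟩ := IsCompact.nonempty_iInter_of_directed_nonempty_isCompact_isClosed F hFdir
    hFne (fun Z => (hcc Z Z.2).inter_right hpre) (fun Z => (hcc Z Z.2).isClosed.inter hpre)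
  rw [mem_iInter] at hz
  obtain ⟨Z₀, hZ₀⟩ := hcne
  exact ⟨x - z, (hz ⟨Z₀, hZ₀⟩).2, z, mem_sInter.2 fun Z hZ => (hz ⟨Z, hZ⟩).1, sub_add_cancel x z⟩

end TopologicalAddGroup

section InnerProductSpace

variable {E : Type*} [NormedAddCommGroup E] [InnerProductSpace ℝ E]

theorem exists_memGMPDiff_subset {X Y W : Set E} (hY : IsClosed Y) (hWne : W.Nonempty)
    (hWc : IsCompact W) (hWconv : Convex ℝ W) (hXW : X ⊆ Y + W) :
    ∃ Z ⊆ W, MemGMPDiff X Y Z := by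
  let S : Set (Set E) := {Z | Z.Nonempty ∧ IsCompact Z ∧ Convex ℝ Z ∧ X ⊆ Y + Z}
  have hchain : ∀ c ⊆ S, IsChain (· ⊆ ·) c → c.Nonempty → ∃ lb ∈ S, ∀ Z ∈ c, lb ⊆ Z := by
    intro c hcS hc hcne
    obtain ⟨Z₀, hZ₀⟩ := hcne
    have : Nonempty c := ⟨⟨Z₀, hZ₀⟩⟩
    have hcl : IsClosed (⋂₀ c) := isClosed_sInter fun Z hZ => (hcS hZ).2.1.isClosed
    have hdir : DirectedOn (· ⊇ ·) c := fun Z₁ h₁ Z₂ h₂ => (hc.total h₁ h₂).elim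
      (fun h => ⟨Z₁, h₁, subset_rfl, h⟩) (fun h => ⟨Z₂, h₂, h, subset_rfl⟩)
    refine ⟨⋂₀ c, ⟨?_, (hcS hZ₀).2.1.of_isClosed_subset hcl (sInter_subset_of_mem hZ₀),
      convex_sInter fun Z hZ => (hcS hZ).2.2.1, fun x hx => ?_⟩, fun Z => sInter_subset_of_mem⟩
    · exact IsCompact.nonempty_sInter_of_directed_nonempty_isCompact_isClosed hdir
        (fun Z hZ => (hcS hZ).1) (fun Z hZ => (hcS hZ).2.1) fun Z hZ => (hcS hZ).2.1.isClosed
    · exact mem_add_sInter_of_directedOn hY hdir ⟨Z₀, hZ₀⟩ (fun Z hZ => (hcS hZ).2.1)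
        fun Z hZ => (hcS hZ).2.2.2 hx
  obtain ⟨Z, hZW, ⟨hZne, hZc, hZconv, hXZ⟩, hmin⟩ :=
    zorn_superset_nonempty S hchain W ⟨hWne, hWc, hWconv, hXW⟩
  exact ⟨Z, hZW, hZne, hZc, hZconv, hXZ, fun Z' hne hc hconv hss hXZ' =>
    hss.not_subset (hmin ⟨hne, hc, hconv, hXZ'⟩ hss.subset)⟩

theorem memGMPDiff_singleton_iff {X Y : Set E} {v : E} : MemGMPDiff X Y {v} ↔ X ⊆ Y + {v} :=
  ⟨fun h => h.2.2.2.1, fun h => ⟨singleton_nonempty v, isCompact_singleton, convex_singleton v, h,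
    fun _ hne _ _ hss _ => hss.ne (hne.subset_singleton_iff.1 hss.subset)⟩⟩

theorem memGMPDiff_self_iff {Y Z : Set E} (hYne : Y.Nonempty) (hYc : IsCompact Y) :
    MemGMPDiff Y Y Z ↔ Z = {0} := by
  refine ⟨fun ⟨_, hZc, hZconv, hYZ, hmin⟩ => ?_, fun h => h ▸ memGMPDiff_singleton_iff.2 ?_⟩
  · have h0 : (0 : E) ∈ Z := zero_mem_of_subset_add_self hYne hYc hZc.isClosed hZconv hYZ
    by_contra hne
    exact hmin {0} (singleton_nonempty 0) isCompact_singleton (convex_singleton 0)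
      ((singleton_subset_iff.2 h0).ssubset_of_ne (Ne.symm hne)) (add_zero Y).superset
  · exact (add_zero Y).superset

end InnerProductSpace

theorem gmpDiff_invertability_general
    {E : Type*} [NormedAddCommGroup E] [InnerProductSpace ℝ E]
    (X Y : Set E)
    (hXne : X.Nonempty) (hXc : IsCompact X) (hXconv : Convex ℝ X)
    (hYc : IsCompact Y) :
    {Z : Set E | MemGMPDiff X Y Z} = {({0} : Set E)} ↔ X = Y := by
  refine ⟨fun h => ?_, fun h => ?_⟩
  · have hmem (Z : Set E) : MemGMPDiff X Y Z ↔ Z = {0} := Set.ext_iff.1 h Z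
    have hXY : X ⊆ Y := by simpa using memGMPDiff_singleton_iff.1 ((hmem {0}).2 rfl)
    refine hXY.antisymm fun y hy => ?_
    have hXW : X ⊆ Y + (-y +ᵥ X) := fun x hx => by
      simpa using add_mem_add hy (vadd_mem_vadd_set (a := (-y : E)) hx)
    obtain ⟨Z, hZW, hZ⟩ := exists_memGMPDiff_subset hYc.isClosed hXne.vadd_set
      (hXc.vadd (-y)) (hXconv.vadd (-y)) hXW
    have h0 : (0 : E) ∈ -y +ᵥ X := hZW ((hmem Z).1 hZ ▸ mem_singleton 0)
    simpa [mem_vadd_set_iff_neg_vadd_mem] using h0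
  · subst h
    ext Z
    exact memGMPDiff_self_iff hXne hXc

theorem gmpDiff_invertability
    {E : Type*} [NormedAddCommGroup E] [InnerProductSpace ℝ E] [FiniteDimensional ℝ E]
    (X Y : Set E)
    (hXne : X.Nonempty) (hXc : IsCompact X) (hXconv : Convex ℝ X)
    (hYne : Y.Nonempty) (hYc : IsCompact Y) (hYconv : Convex ℝ Y) :
    {Z : Set E | MemGMPDiff X Y Z} = {({0} : Set E)} ↔ X = Y :=
  gmpDiff_invertability_general X Y hXne hXc hXconv hYc
end

section
/- Let E be a finite-dimensional real inner product space, let X, Y, Z, W be nonempty compact convex subsets of E, and let p ∈ E. Then inf_{U ∈ (X+Z) ÷ (Y+W)} h_U(p) = inf_{V ∈ X ÷ Y} h_V(p) + inf_{V' ∈ Z ÷ W} h_{V'}(p), where h_A denotes the support function of A. -/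
open Pointwise
open scoped RealInnerProductSpace

section Aux

variable {E : Type*} [NormedAddCommGroup E] [InnerProductSpace ℝ E]

lemma aux_bddAbove {A : Set E} (hA : IsCompact A) (p : E) :
    BddAbove ((fun a => ⟪p, a⟫) '' A) :=
  (hA.image (continuous_const.inner continuous_id)).bddAbove

lemma aux_mono {A B : Set E} (hA : A.Nonempty) (hB : IsCompact B) (h : A ⊆ B) (p : E) :
    supportFn A p ≤ supportFn B p :=
  csSup_le_csSup (aux_bddAbove hB p) (hA.image _) (Set.image_mono h)

lemma aux_add {A B : Set E} (hAne : A.Nonempty) (hA : IsCompact A)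
    (hBne : B.Nonempty) (hB : IsCompact B) (p : E) :
    supportFn (A + B) p = supportFn A p + supportFn B p := by
  have himg : (fun a => ⟪p, a⟫) '' (A + B)
      = ((fun a => ⟪p, a⟫) '' A) + ((fun a => ⟪p, a⟫) '' B) := by
    ext x
    constructor
    · rintro ⟨z, ⟨a, ha, b, hb, rfl⟩, rfl⟩
      exact ⟨⟪p, a⟫, ⟨a, ha, rfl⟩, ⟪p, b⟫, ⟨b, hb, rfl⟩, (inner_add_right p a b).symm⟩
    · rintro ⟨u, ⟨a, ha, rfl⟩, v, ⟨b, hb, rfl⟩, rfl⟩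
      exact ⟨a + b, ⟨a, ha, b, hb, rfl⟩, inner_add_right p a b⟩
  rw [supportFn, himg,
    csSup_add (hAne.image _) (aux_bddAbove hA p) (hBne.image _) (aux_bddAbove hB p)]
  rfl

lemma aux_lower {X Y Z : Set E} (hXne : X.Nonempty)
    (hYne : Y.Nonempty) (hYc : IsCompact Y)
    (hZne : Z.Nonempty) (hZc : IsCompact Z) (hsub : X ⊆ Y + Z) (p : E) :
    supportFn X p - supportFn Y p ≤ supportFn Z p := by
  have h1 : supportFn X p ≤ supportFn (Y + Z) p :=
    aux_mono hXne (hYc.add hZc) hsub p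
  rw [aux_add hYne hYc hZne hZc p] at h1
  linarith

/-- every admissible compact convex set contains a minimal one -/
lemma aux_exists_minimal {X Y : Set E} (hYc : IsCompact Y)
    (Z : Set E) (hZne : Z.Nonempty) (hZc : IsCompact Z) (hZconv : Convex ℝ Z)
    (hsub : X ⊆ Y + Z) :
    ∃ M, MemGMPDiff X Y M ∧ M ⊆ Z := by
  set S : Set (Set E) :=
    {Z' | Z' ⊆ Z ∧ Z'.Nonempty ∧ IsCompact Z' ∧ Convex ℝ Z' ∧ X ⊆ Y + Z'} with hS
  have hchain : ∀ c ⊆ S, IsChain (· ⊆ ·) c → c.Nonempty →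
      ∃ lb ∈ S, ∀ s ∈ c, lb ⊆ s := by
    intro c hcS hchain hcne
    haveI : Nonempty c := hcne.to_subtype
    have hdir : Directed (· ⊇ ·) (fun i : c => (i : Set E)) := by
      intro i j
      rcases hchain.total i.2 j.2 with h | h
      · exact ⟨i, subset_rfl, h⟩
      · exact ⟨j, h, subset_rfl⟩
    have hne : ∀ i : c, ((i : Set E)).Nonempty := fun i => (hcS i.2).2.1
    have hcpt : ∀ i : c, IsCompact ((i : Set E)) := fun i => (hcS i.2).2.2.1
    have hcl : ∀ i : c, IsClosed ((i : Set E)) := fun i => (hcpt i).isClosed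
    have hsInter : ⋂₀ c = ⋂ i : c, (i : Set E) := (Set.sInter_eq_iInter)
    refine ⟨⋂₀ c, ⟨?_, ?_, ?_, ?_, ?_⟩, fun s hs => Set.sInter_subset_of_mem hs⟩
    · obtain ⟨s, hs⟩ := hcne
      exact (Set.sInter_subset_of_mem hs).trans (hcS hs).1
    · rw [hsInter]
      exact IsCompact.nonempty_iInter_of_directed_nonempty_isCompact_isClosed
        _ hdir hne hcpt hcl
    · rw [hsInter]
      exact (hcpt (Classical.arbitrary _)).of_isClosed_subset (isClosed_iInter hcl)
        (Set.iInter_subset _ _)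
    · exact convex_sInter (fun s hs => (hcS hs).2.2.2.1)
    · -- X ⊆ Y + ⋂₀ c
      intro x hx
      set K : c → Set E := fun i => {z ∈ (i : Set E) | x - z ∈ Y} with hK
      have hKne : ∀ i : c, (K i).Nonempty := by
        intro i
        obtain ⟨y, hy, z, hz, hyz⟩ := (hcS i.2).2.2.2.2 hx
        exact ⟨z, hz, by rw [← hyz]; simpa using hy⟩
      have hKcl : ∀ i : c, IsClosed (K i) := by
        intro i
        exact (hcl i).inter (hYc.isClosed.preimage (continuous_const.sub continuous_id))
      have hKcpt : ∀ i : c, IsCompact (K i) := fun i =>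
        (hcpt i).of_isClosed_subset (hKcl i) (fun z hz => hz.1)
      have hKdir : Directed (· ⊇ ·) K := by
        intro i j
        rcases hchain.total i.2 j.2 with h | h
        · exact ⟨i, subset_rfl, fun z hz => ⟨h hz.1, hz.2⟩⟩
        · exact ⟨j, fun z hz => ⟨h hz.1, hz.2⟩, subset_rfl⟩
      obtain ⟨z, hz⟩ := IsCompact.nonempty_iInter_of_directed_nonempty_isCompact_isClosed
        K hKdir hKne hKcpt hKcl
      simp only [Set.mem_iInter] at hz
      obtain ⟨i₀⟩ := (inferInstance : Nonempty c)
      refine ⟨x - z, (hz i₀).2, z, ?_, by module⟩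
      rw [hsInter]
      exact Set.mem_iInter.2 fun i => (hz i).1
  obtain ⟨M, hMZ, hMmin⟩ := zorn_superset_nonempty S hchain Z
    ⟨subset_rfl, hZne, hZc, hZconv, hsub⟩
  obtain ⟨hM1, hM2, hM3, hM4, hM5⟩ := hMmin.prop
  refine ⟨M, ⟨hM2, hM3, hM4, hM5, ?_⟩, hMZ⟩
  intro Z' hZ'ne hZ'c hZ'conv hss hcov
  have : Z' ∈ S := ⟨hss.subset.trans hM1, hZ'ne, hZ'c, hZ'conv, hcov⟩
  exact hss.ne (Set.Subset.antisymm hss.subset (hMmin.2 this hss.subset))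

/-- the main computation for a single difference -/
lemma aux_key {X Y : Set E}
    (hXne : X.Nonempty) (hXc : IsCompact X) (hXconv : Convex ℝ X)
    (hYne : Y.Nonempty) (hYc : IsCompact Y) (hYconv : Convex ℝ Y) (p : E) :
    sInf ((fun V => supportFn V p) '' {V : Set E | MemGMPDiff X Y V}) =
      supportFn X p - supportFn Y p := by
  set c : ℝ := supportFn X p - supportFn Y p with hc
  -- the face of Y in direction p
  obtain ⟨y₀, hy₀Y, hy₀max⟩ := hYc.exists_isMaxOn hYne
    ((continuous_const.inner continuous_id).continuousOn
      (s := Y) : ContinuousOn (fun a => ⟪p, a⟫) Y)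
  have hsupY : supportFn Y p = ⟪p, y₀⟫ := by
    refine IsGreatest.csSup_eq ⟨⟨y₀, hy₀Y, rfl⟩, ?_⟩
    rintro x ⟨a, ha, rfl⟩
    exact hy₀max ha
  set F : Set E := {y ∈ Y | ⟪p, y⟫ = supportFn Y p} with hF
  have hFne : F.Nonempty := ⟨y₀, hy₀Y, hsupY.symm⟩
  have hFc : IsCompact F := by
    refine hYc.of_isClosed_subset ?_ (fun y hy => hy.1)
    exact hYc.isClosed.inter
      (isClosed_eq (continuous_const.inner continuous_id) continuous_const)
  have hFconv : Convex ℝ F := by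
    intro y1 hy1 y2 hy2 a b ha hb hab
    refine ⟨hYconv hy1.1 hy2.1 ha hb hab, ?_⟩
    rw [inner_add_right, real_inner_smul_right, real_inner_smul_right, hy1.2, hy2.2]
    ring_nf
    linear_combination (supportFn Y p) * hab
  -- the admissible set Z₀ = X + (-F)
  set Z₀ : Set E := X + (-F) with hZ₀
  have hZ₀ne : Z₀.Nonempty := hXne.add hFne.neg
  have hZ₀c : IsCompact Z₀ := hXc.add hFc.neg
  have hZ₀conv : Convex ℝ Z₀ := hXconv.add hFconv.neg
  have hZ₀sub : X ⊆ Y + Z₀ := by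
    intro x hx
    refine ⟨y₀, hy₀Y, x + (-y₀), ⟨x, hx, -y₀, ?_, rfl⟩, by module⟩
    exact Set.neg_mem_neg.2 ⟨hy₀Y, hsupY.symm⟩
  have hsupnegF : supportFn (-F) p = -supportFn Y p := by
    have : (fun a => ⟪p, a⟫) '' (-F) = {-supportFn Y p} := by
      apply Set.Subset.antisymm
      · rintro x ⟨a, ha, rfl⟩
        rw [Set.mem_neg] at ha
        have : ⟪p, -a⟫ = supportFn Y p := ha.2
        rw [inner_neg_right] at this
        simp [← this]
      · rintro x rfl
        exact ⟨-y₀, Set.neg_mem_neg.2 ⟨hy₀Y, hsupY.symm⟩, by simp [inner_neg_right, hsupY]⟩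
    rw [supportFn, this, csSup_singleton]
  have hsupZ₀ : supportFn Z₀ p = c := by
    rw [hZ₀, aux_add hXne hXc hFne.neg hFc.neg, hsupnegF, hc]; ring
  -- a minimal set inside Z₀
  obtain ⟨M, hM, hMZ₀⟩ := aux_exists_minimal hYc Z₀ hZ₀ne hZ₀c hZ₀conv hZ₀sub
  have hMle : supportFn M p ≤ c := hsupZ₀ ▸ aux_mono hM.1 hZ₀c hMZ₀ p
  have hMge : c ≤ supportFn M p := aux_lower hXne hYne hYc hM.1 hM.2.1 hM.2.2.2.1 p
  have hMeq : supportFn M p = c := le_antisymm hMle hMge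
  apply IsLeast.csInf_eq
  constructor
  · exact ⟨M, hM, hMeq⟩
  · rintro x ⟨U, hU, rfl⟩
    exact aux_lower hXne hYne hYc hU.1 hU.2.1 hU.2.2.2.1 p

end Aux

theorem gmpDiff_support_additive
    {E : Type*} [NormedAddCommGroup E] [InnerProductSpace ℝ E] [FiniteDimensional ℝ E]
    (X Y Z W : Set E)
    (hXne : X.Nonempty) (hXc : IsCompact X) (hXconv : Convex ℝ X)
    (hYne : Y.Nonempty) (hYc : IsCompact Y) (hYconv : Convex ℝ Y)
    (hZne : Z.Nonempty) (hZc : IsCompact Z) (hZconv : Convex ℝ Z)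
    (hWne : W.Nonempty) (hWc : IsCompact W) (hWconv : Convex ℝ W)
    (p : E) :
    sInf ((fun U => supportFn U p) '' {U : Set E | MemGMPDiff (X + Z) (Y + W) U}) =
      sInf ((fun V => supportFn V p) '' {V : Set E | MemGMPDiff X Y V}) +
        sInf ((fun V' => supportFn V' p) '' {V' : Set E | MemGMPDiff Z W V'}) := by
  rw [aux_key hXne hXc hXconv hYne hYc hYconv p,
    aux_key hZne hZc hZconv hWne hWc hWconv p,
    aux_key (hXne.add hZne) (hXc.add hZc) (hXconv.add hZconv)
      (hYne.add hWne) (hYc.add hWc) (hYconv.add hWconv) p,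
    aux_add hXne hXc hZne hZc p, aux_add hYne hYc hWne hWc p]
  ring
end

section
/- Let E be a finite-dimensional real inner product space and let X, Y, Z be subsets of E such that Y is closed and convex, Z is nonempty and bounded, and X + Z ⊆ Y + Z (Minkowski sums). Then X ⊆ Y. -/
/-!
If `x + Z ⊆ Y + Z`, each `z ∈ Z` can be written `z = y + z' - x` with `y ∈ Y`, `z' ∈ Z`; iterating
from some `z₀ ∈ Z` gives `zₙ ∈ Z` with `x + zₙ - zₙ₊₁ ∈ Y`. The average of the first `n` of these
points telescopes to `x + (z₀ - zₙ) / n`, which lies in `Y` by convexity and tends to `x` because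
`Z` is bounded; `Y` is closed.
-/

open Pointwise Filter Topology

lemma exists_seq_add_sub_mem_of_vadd_subset_add {G : Type*} [AddGroup G] {x : G} {Y Z : Set G}
    (h : x +ᵥ Z ⊆ Y + Z) {z₀ : G} (hz₀ : z₀ ∈ Z) :
    ∃ z : ℕ → G, z 0 = z₀ ∧ (∀ n, z n ∈ Z) ∧ ∀ n, x + z n - z (n + 1) ∈ Y := by
  have step : ∀ w : Z, ∃ w' : Z, x + (w : G) - w' ∈ Y := by
    rintro ⟨w, hw⟩
    obtain ⟨y, hy, w', hw', hyw'⟩ := h (Set.vadd_mem_vadd_set hw)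
    exact ⟨⟨w', hw'⟩, by rwa [← vadd_eq_add, ← hyw', add_sub_cancel_right]⟩
  choose next hnext using step
  refine ⟨fun n => next^[n] ⟨z₀, hz₀⟩, rfl, fun n => Subtype.prop _, fun n => ?_⟩
  simpa only [Function.iterate_succ_apply'] using hnext (next^[n] ⟨z₀, hz₀⟩)

lemma Convex.add_inv_natCast_smul_sub_mem {E : Type*} [AddCommGroup E] [Module ℝ E] {Y : Set E}
    (hY : Convex ℝ Y) {x : E} {z : ℕ → E} (hz : ∀ n, x + z n - z (n + 1) ∈ Y) {n : ℕ}
    (hn : n ≠ 0) : x + (n : ℝ)⁻¹ • (z 0 - z n) ∈ Y := by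
  have hn' : (n : ℝ) ≠ 0 := Nat.cast_ne_zero.mpr hn
  have hmean : ∑ i ∈ Finset.range n, (n : ℝ)⁻¹ • (x + z i - z (i + 1)) ∈ Y :=
    hY.sum_mem (fun _ _ => by positivity) (by simp [hn']) fun i _ => hz i
  convert hmean using 1
  simp_rw [← Finset.smul_sum, add_sub_assoc, Finset.sum_add_distrib, Finset.sum_range_sub',
    Finset.sum_const, Finset.card_range, smul_add, ← Nat.cast_smul_eq_nsmul ℝ, smul_smul,
    inv_mul_cancel₀ hn', one_smul]

lemma IsClosed.mem_of_vadd_subset_add {E : Type*} [NormedAddCommGroup E] [NormedSpace ℝ E]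
    {x : E} {Y Z : Set E} (hYcl : IsClosed Y) (hYconv : Convex ℝ Y) (hZne : Z.Nonempty)
    (hZb : Bornology.IsBounded Z) (h : x +ᵥ Z ⊆ Y + Z) : x ∈ Y := by
  obtain ⟨z₀, hz₀⟩ := hZne
  obtain ⟨z, rfl, hzZ, hzY⟩ := exists_seq_add_sub_mem_of_vadd_subset_add h hz₀
  obtain ⟨C, hC⟩ := hZb.exists_norm_le
  have hbdd : IsBoundedUnder (· ≤ ·) atTop (norm ∘ fun n => z 0 - z n) :=
    isBoundedUnder_of ⟨C + C, fun n =>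
      (norm_sub_le _ _).trans (add_le_add (hC _ (hzZ 0)) (hC _ (hzZ n)))⟩
  have hlim : Tendsto (fun n : ℕ => x + (n : ℝ)⁻¹ • (z 0 - z n)) atTop (𝓝 x) := by
    simpa using tendsto_const_nhds.add
      (tendsto_inv_atTop_nhds_zero_nat.zero_smul_isBoundedUnder_le hbdd)
  exact hYcl.mem_of_tendsto hlim
    (eventually_ne_atTop 0 |>.mono fun n hn => hYconv.add_inv_natCast_smul_sub_mem hzY hn)

theorem cancellation_of_minkowski_sum_general
    {E : Type*} [NormedAddCommGroup E] [InnerProductSpace ℝ E]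
    (X Y Z : Set E)
    (hYcl : IsClosed Y) (hYconv : Convex ℝ Y)
    (hZne : Z.Nonempty) (hZb : Bornology.IsBounded Z)
    (h : X + Z ⊆ Y + Z) :
    X ⊆ Y := fun _ hx =>
  hYcl.mem_of_vadd_subset_add hYconv hZne hZb <|
    (Set.vadd_set_subset_add hx).trans h

theorem cancellation_of_minkowski_sum
    {E : Type*} [NormedAddCommGroup E] [InnerProductSpace ℝ E] [FiniteDimensional ℝ E]
    (X Y Z : Set E)
    (hYcl : IsClosed Y) (hYconv : Convex ℝ Y)
    (hZne : Z.Nonempty) (hZb : Bornology.IsBounded Z)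
    (h : X + Z ⊆ Y + Z) :
    X ⊆ Y :=
  cancellation_of_minkowski_sum_general X Y Z hYcl hYconv hZne hZb h
end

section
/- Let E be a finite-dimensional real inner product space, let f : E → ℝ be a convex function, let x ∈ E, let ε > 0, and let 0 < υ < ε. Then there exists a constant L ≥ 0 such that for all ε', ε'' ∈ [ε − υ, ε + υ], the Hausdorff distance between ∂_{ε'} f(x) and ∂_{ε''} f(x) satisfies d(∂_{ε'} f(x), ∂_{ε''} f(x)) ≤ L · |ε' − ε''|; i.e., the map ε ↦ ∂_ε f(x) is Lipschitz continuous in the Hausdorff metric on [ε − υ, ε + υ]. -/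
open Pointwise
open scoped RealInnerProductSpace

/-- The `ε`-subdifferential of `f` at `x`:
`∂_ε f(x) = {g : ∀ y, f y - f x ≥ ⟪g, y - x⟫ - ε}`. -/
def epsSubdiff {E : Type*} [NormedAddCommGroup E] [InnerProductSpace ℝ E]
    (f : E → ℝ) (x : E) (ε : ℝ) : Set E :=
  {g : E | ∀ y : E, f y - f x ≥ ⟪g, y - x⟫ - ε}

-- monotonicity
lemma epsSubdiff_mono' {E : Type*} [NormedAddCommGroup E] [InnerProductSpace ℝ E]
    (f : E → ℝ) (x : E) {a b : ℝ} (h : a ≤ b) : epsSubdiff f x a ⊆ epsSubdiff f x b := by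
  intro g hg y
  have := hg y
  linarith

-- existence of an ε-subgradient
lemma epsSubdiff_nonempty' {E : Type*} [NormedAddCommGroup E] [InnerProductSpace ℝ E]
    [FiniteDimensional ℝ E] (f : E → ℝ) (hf : ConvexOn ℝ Set.univ f) (x : E)
    {α : ℝ} (hα : 0 < α) : ∃ g, g ∈ epsSubdiff f x α := by
  haveI : CompleteSpace E := FiniteDimensional.complete ℝ E
  have hcont : Continuous f := continuousOn_univ.mp (hf.continuousOn isOpen_univ)
  set S : Set (E × ℝ) := {p : E × ℝ | f p.1 ≤ p.2} with hS
  have hSconv : Convex ℝ S := by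
    have := hf.convex_epigraph
    simpa using this
  have hSclosed : IsClosed S := isClosed_le (hcont.comp continuous_fst) continuous_snd
  have hnot : ((x, f x - α) : E × ℝ) ∉ S := by
    simp only [hS, Set.mem_setOf_eq]
    linarith
  obtain ⟨φ, u, hu1, hu2⟩ := geometric_hahn_banach_point_closed hSconv hSclosed hnot
  set c : ℝ := φ (0, 1) with hc
  have hφ : ∀ (y : E) (t : ℝ), φ (y, t) = φ (y, 0) + t * c := by
    intro y t
    have : ((y, t) : E × ℝ) = (y, (0:ℝ)) + t • ((0:E), (1:ℝ)) := by
      simp [Prod.ext_iff]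
    rw [this, map_add, map_smul, smul_eq_mul]
  have hcx : ∀ t : ℝ, f x ≤ t → u < φ (x, 0) + t * c := by
    intro t ht
    have := hu2 (x, t) ht
    rwa [hφ] at this
  have hxu : φ (x, 0) + (f x - α) * c < u := by have := hu1; rwa [hφ] at this
  have hc0 : 0 < c := by
    have hx0 := hcx (f x) le_rfl
    nlinarith [hxu, hx0, hα]
  set v : E := (InnerProductSpace.toDual ℝ E).symm (φ.comp (ContinuousLinearMap.inl ℝ E ℝ))
  refine ⟨(-c⁻¹) • v, fun y => ?_⟩
  have hvy : ∀ z : E, ⟪v, z⟫ = φ (z, 0) := fun z => by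
    simp [v, InnerProductSpace.toDual_symm_apply]
  have hkey : φ (x, 0) + (f x - α) * c < φ (y, 0) + f y * c := by
    have := hcx  -- unused
    have h2 := hu2 (y, f y) (le_refl (f y))
    rw [hφ] at h2
    linarith
  have hinner : ⟪(-c⁻¹) • v, y - x⟫ = (-c⁻¹) * (φ (y, 0) - φ (x, 0)) := by
    rw [real_inner_smul_left, hvy (y - x)]
    have : ((y - x : E), (0:ℝ)) = ((y, (0:ℝ)) - (x, (0:ℝ))) := by simp [Prod.ext_iff]
    rw [this, map_sub]
  rw [ge_iff_le, hinner]
  have hcne : c ≠ 0 := ne_of_gt hc0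
  refine le_of_mul_le_mul_left ?_ hc0
  have h1 : c * (-c⁻¹ * (φ (y, 0) - φ (x, 0)) - α) = -(φ (y, 0) - φ (x, 0)) - c * α := by
    field_simp
  rw [h1]
  nlinarith [hkey]

-- interpolation
lemma epsSubdiff_interp {E : Type*} [NormedAddCommGroup E] [InnerProductSpace ℝ E]
    (f : E → ℝ) (x : E) {a b t : ℝ} {g h : E} (ht0 : 0 ≤ t) (ht1 : t ≤ 1)
    (hg : g ∈ epsSubdiff f x a) (hh : h ∈ epsSubdiff f x b) :
    (1 - t) • g + t • h ∈ epsSubdiff f x ((1 - t) * a + t * b) := by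
  intro y
  have h1 := hg y
  have h2 := hh y
  rw [inner_add_left, real_inner_smul_left, real_inner_smul_left]
  nlinarith

-- boundedness
lemma epsSubdiff_norm_bound {E : Type*} [NormedAddCommGroup E] [InnerProductSpace ℝ E]
    [FiniteDimensional ℝ E] (f : E → ℝ) (hf : ConvexOn ℝ Set.univ f) (x : E) (β : ℝ) :
    ∃ M : ℝ, 0 ≤ M ∧ ∀ g ∈ epsSubdiff f x β, ‖g‖ ≤ M := by
  have hcont : Continuous f := continuousOn_univ.mp (hf.continuousOn isOpen_univ)
  obtain ⟨C, hC⟩ := (isCompact_closedBall x 1).exists_bound_of_continuousOn hcont.continuousOn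
  have hC0 : 0 ≤ C := (norm_nonneg (f x)).trans (hC x (by simp))
  have habs : 0 ≤ C + |f x| + |β| := by
    have := abs_nonneg (f x); have := abs_nonneg β; linarith
  refine ⟨C + |f x| + |β|, habs, fun g hg => ?_⟩
  rcases eq_or_ne g 0 with rfl | hg0
  · simpa using habs
  · have hgn : 0 < ‖g‖ := norm_pos_iff.mpr hg0
    have hy := hg (x + ‖g‖⁻¹ • g)
    rw [add_sub_cancel_left, real_inner_smul_right, real_inner_self_eq_norm_sq] at hy
    have h1 : ‖g‖⁻¹ * ‖g‖ ^ 2 = ‖g‖ := by field_simp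
    rw [h1] at hy
    have hmem : x + ‖g‖⁻¹ • g ∈ Metric.closedBall x 1 := by
      simp [norm_smul, abs_of_pos (inv_pos.mpr hgn), inv_mul_cancel₀ (ne_of_gt hgn)]
    have hb := hC _ hmem
    have h2 : f (x + ‖g‖⁻¹ • g) ≤ C := (le_abs_self _).trans hb
    have h3 : -(f x) ≤ |f x| := neg_le_abs _
    have h4 : β ≤ |β| := le_abs_self _
    linarith

theorem epsSubdiff_lipschitz_hausdorff
    {E : Type*} [NormedAddCommGroup E] [InnerProductSpace ℝ E] [FiniteDimensional ℝ E]
    (f : E → ℝ) (hf : ConvexOn ℝ Set.univ f) (x : E)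
    (ε υ : ℝ) (hε : 0 < ε) (hυ0 : 0 < υ) (hυε : υ < ε) :
    ∃ L : ℝ, 0 ≤ L ∧
      ∀ ε' ε'' : ℝ, ε - υ ≤ ε' → ε' ≤ ε + υ → ε - υ ≤ ε'' → ε'' ≤ ε + υ →
        Metric.hausdorffDist (epsSubdiff f x ε') (epsSubdiff f x ε'') ≤ L * |ε' - ε''| := by
  set α : ℝ := (ε - υ) / 2 with hαdef
  have hα : 0 < α := by simp [hαdef]; linarith
  obtain ⟨g₀, hg₀⟩ := epsSubdiff_nonempty' f hf x hα
  obtain ⟨M, hM0, hM⟩ := epsSubdiff_norm_bound f hf x (ε + υ)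
  refine ⟨(M + ‖g₀‖) / α, by positivity, ?_⟩
  have key : ∀ a b : ℝ, ε - υ ≤ a → a ≤ b → b ≤ ε + υ →
      Metric.hausdorffDist (epsSubdiff f x a) (epsSubdiff f x b) ≤ (M + ‖g₀‖) / α * (b - a) := by
    intro a b ha hab hb
    have hr : 0 ≤ (M + ‖g₀‖) / α * (b - a) := by
      apply mul_nonneg (by positivity); linarith
    apply Metric.hausdorffDist_le_of_mem_dist hr
    · intro p hp
      exact ⟨p, epsSubdiff_mono' f x hab hp, by simp [hr]⟩
    · intro q hq
      have hbα : 0 < b - α := by simp [hαdef] at *; linarith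
      set t : ℝ := (b - a) / (b - α) with htdef
      have ht0 : 0 ≤ t := div_nonneg (by linarith) hbα.le
      have ht1 : t ≤ 1 := by
        rw [htdef, div_le_one hbα]
        have : α ≤ a := by simp [hαdef] at *; linarith
        linarith
      refine ⟨(1 - t) • q + t • g₀, ?_, ?_⟩
      · have hmem := epsSubdiff_interp f x ht0 ht1 hq hg₀
        have heq : (1 - t) * b + t * α = a := by
          rw [htdef]; field_simp; ring
        rwa [heq] at hmem
      · have hdist : dist q ((1 - t) • q + t • g₀) = t * ‖q - g₀‖ := by
          rw [dist_eq_norm]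
          have : q - ((1 - t) • q + t • g₀) = t • (q - g₀) := by
            rw [smul_sub, sub_smul, one_smul]; abel
          rw [this, norm_smul, Real.norm_eq_abs, abs_of_nonneg ht0]
        rw [hdist]
        have hqM : ‖q‖ ≤ M := hM q (epsSubdiff_mono' f x hb hq)
        have hqg : ‖q - g₀‖ ≤ M + ‖g₀‖ := (norm_sub_le _ _).trans (by linarith)
        have htb : t ≤ (b - a) / α := by
          rw [htdef]
          apply div_le_div_of_nonneg_left (by linarith) hα
          simp [hαdef] at *; linarith
        calc t * ‖q - g₀‖ ≤ (b - a) / α * (M + ‖g₀‖) := by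
              apply mul_le_mul htb hqg (norm_nonneg _)
              apply div_nonneg (by linarith) hα.le
          _ = (M + ‖g₀‖) / α * (b - a) := by ring
  intro ε' ε'' h1 h2 h3 h4
  rcases le_total ε' ε'' with h | h
  · rw [abs_of_nonpos (by linarith), neg_sub]
    exact key ε' ε'' h1 h h4
  · rw [abs_of_nonneg (by linarith), Metric.hausdorffDist_comm]
    exact key ε'' ε' h3 h h2
end
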